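/- arXiv:1405.0795 — 3 statements merged into one kernel-verified Lean document; each statement's English description precedes it below -/
import Mathlib

section
/- With Ω finite and d : Ω × Ω → ℝ≥0 satisfying separation, the distance-based revision operator satisfies postulates (∗5) and (∗6): Mod(ψ ∗ μ) ∩ Mod(φ) ⊆ Mod(ψ ∗ (μ ∧ φ)), and if Mod(ψ ∗ μ) ∩ Mod(φ) ≠ ∅ then Mod(ψ ∗ (μ ∧ φ)) ⊆ Mod(ψ ∗ μ) ∩ Mod(φ). -/
open Set

/-- Distance from a set of interpretations to an interpretation:
`d(A, ω) = inf_{x ∈ A} d(x, ω)`. -/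
noncomputable def dSet {Ω : Type*} (d : Ω → Ω → ℝ) (A : Set Ω) (ω : Ω) : ℝ :=
  sInf ((fun x => d x ω) '' A)

/-- Distance between two sets of interpretations:
`d(A, B) = inf_{x ∈ A, y ∈ B} d(x, y)`. -/
noncomputable def dSets {Ω : Type*} (d : Ω → Ω → ℝ) (A B : Set Ω) : ℝ :=
  sInf (Set.image2 d A B)

/-- Distance-based revision: the models of `ψ ∗ μ` are the models of `μ`
closest to the models of `ψ`. -/
noncomputable def rev {Ω : Type*} (d : Ω → Ω → ℝ) (A M : Set Ω) : Set Ω :=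
  {ω ∈ M | dSet d A ω = dSets d A M}

lemma dSets_le_dSet {Ω : Type*} [Fintype Ω] (d : Ω → Ω → ℝ) {A B : Set Ω}
    (hA : A.Nonempty) {ω : Ω} (hω : ω ∈ B) : dSets d A B ≤ dSet d A ω := by
  apply csInf_le_csInf (Set.Finite.bddBelow (Set.toFinite _)) (hA.image _)
  rintro x ⟨a, ha, rfl⟩
  exact ⟨a, ha, ω, hω, rfl⟩

lemma dSets_mono {Ω : Type*} [Fintype Ω] (d : Ω → Ω → ℝ) {A B B' : Set Ω}
    (hA : A.Nonempty) (hB' : B'.Nonempty) (hsub : B' ⊆ B) :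
    dSets d A B ≤ dSets d A B' := by
  apply csInf_le_csInf (Set.Finite.bddBelow (Set.toFinite _)) (hA.image2 hB')
  exact Set.image2_subset (le_refl A) hsub

/-- postulates (∗5) and (∗6):
`(ψ ∗ μ) ∧ φ ⊨ ψ ∗ (μ ∧ φ)` and, if `(ψ ∗ μ) ∧ φ` is consistent,
`ψ ∗ (μ ∧ φ) ⊨ (ψ ∗ μ) ∧ φ`. -/
theorem rev_postulates_5_6 {Ω : Type*} [Fintype Ω] (d : Ω → Ω → ℝ)
    (hnonneg : ∀ ω ν, 0 ≤ d ω ν)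
    (hsep : ∀ ω ν, d ω ν = 0 ↔ ω = ν)
    (ψ μ φ : Set Ω) (hψ : ψ.Nonempty) (hμ : μ.Nonempty) :
    rev d ψ μ ∩ φ ⊆ rev d ψ (μ ∩ φ) ∧
    ((rev d ψ μ ∩ φ).Nonempty → rev d ψ (μ ∩ φ) ⊆ rev d ψ μ ∩ φ) := by
  constructor
  · rintro ω ⟨⟨hωμ, heq⟩, hωφ⟩
    have hmem : ω ∈ μ ∩ φ := ⟨hωμ, hωφ⟩
    refine ⟨hmem, le_antisymm ?_ (dSets_le_dSet d hψ hmem)⟩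
    calc dSet d ψ ω = dSets d ψ μ := heq
    _ ≤ dSets d ψ (μ ∩ φ) :=
        dSets_mono d hψ ⟨ω, hmem⟩ Set.inter_subset_left
  · rintro ⟨ω0, ⟨hω0μ, heq0⟩, hω0φ⟩
    have hmem0 : ω0 ∈ μ ∩ φ := ⟨hω0μ, hω0φ⟩
    have hkey : dSets d ψ (μ ∩ φ) = dSets d ψ μ :=
      le_antisymm (heq0 ▸ dSets_le_dSet d hψ hmem0)
        (dSets_mono d hψ ⟨ω0, hmem0⟩ Set.inter_subset_left)
    rintro ν ⟨⟨hνμ, hνφ⟩, heq⟩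
    exact ⟨⟨hνμ, heq.trans hkey⟩, hνφ⟩
end

section
/- (Revision of disjunctions) Let Ω be finite, d : Ω × Ω → ℝ≥0, and define for sets A, M ⊆ Ω the revision A ∗ M = {ω ∈ M | d(A, ω) = d(A, M)}. If A = ⋃ᵢ Aᵢ and M = ⋃ⱼ Mⱼ are finite unions of nonempty sets, and Δ = d(A, M), Δᵢⱼ = d(Aᵢ, Mⱼ), then A ∗ M = ⋃_{(i,j) : Δᵢⱼ = Δ} (Aᵢ ∗ Mⱼ). -/
open Set

lemma dSet_le {Ω : Type*} [Fintype Ω] (d : Ω → Ω → ℝ) {A : Set Ω} {x ω : Ω}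
    (hx : x ∈ A) : dSet d A ω ≤ d x ω :=
  csInf_le ((A.toFinite.image _).bddBelow) ⟨x, hx, rfl⟩

lemma dSet_mem {Ω : Type*} [Fintype Ω] (d : Ω → Ω → ℝ) {A : Set Ω} (hA : A.Nonempty)
    (ω : Ω) : ∃ x ∈ A, dSet d A ω = d x ω := by
  have := (hA.image (fun x => d x ω)).csInf_mem (A.toFinite.image _)
  obtain ⟨x, hx, hxe⟩ := this
  exact ⟨x, hx, hxe.symm⟩

lemma dSets_le {Ω : Type*} [Fintype Ω] (d : Ω → Ω → ℝ) {A B : Set Ω} {x y : Ω}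
    (hx : x ∈ A) (hy : y ∈ B) : dSets d A B ≤ d x y :=
  csInf_le ((A.toFinite.image2 _ B.toFinite).bddBelow) ⟨x, hx, y, hy, rfl⟩

lemma dSets_mem {Ω : Type*} [Fintype Ω] (d : Ω → Ω → ℝ) {A B : Set Ω}
    (hA : A.Nonempty) (hB : B.Nonempty) : ∃ x ∈ A, ∃ y ∈ B, dSets d A B = d x y := by
  have hne : (Set.image2 d A B).Nonempty := hA.image2 hB
  have := hne.csInf_mem (A.toFinite.image2 _ B.toFinite)
  obtain ⟨x, hx, y, hy, hxy⟩ := this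
  exact ⟨x, hx, y, hy, hxy.symm⟩

/-- revision of disjunctions: with `Δ = d(A, M)` and
`Δᵢⱼ = d(Aᵢ, Mⱼ)`, the revision of `A = ⋃ᵢ Aᵢ` by `M = ⋃ⱼ Mⱼ` is the
union of the `Aᵢ ∗ Mⱼ` over the pairs `(i, j)` with `Δᵢⱼ = Δ`. -/
theorem rev_of_unions {Ω : Type*} [Fintype Ω] (d : Ω → Ω → ℝ)
    {m n : ℕ} (hm : 0 < m) (hn : 0 < n)
    (A : Fin m → Set Ω) (M : Fin n → Set Ω)
    (hA : ∀ i, (A i).Nonempty) (hM : ∀ j, (M j).Nonempty) :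
    rev d (⋃ i, A i) (⋃ j, M j)
      = ⋃ p ∈ {p : Fin m × Fin n |
            dSets d (A p.1) (M p.2) = dSets d (⋃ i, A i) (⋃ j, M j)},
          rev d (A p.1) (M p.2) := by
  set Au := ⋃ i, A i with hAu
  set Mu := ⋃ j, M j with hMu
  -- Δ ≤ Δᵢⱼ for all i, j
  have hDle : ∀ i j, dSets d Au Mu ≤ dSets d (A i) (M j) := by
    intro i j
    obtain ⟨x, hx, y, hy, hxy⟩ := dSets_mem d (hA i) (hM j)
    rw [hxy]
    exact dSets_le d (mem_iUnion.2 ⟨i, hx⟩) (mem_iUnion.2 ⟨j, hy⟩)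
  ext ω
  simp only [rev, mem_setOf_eq, mem_iUnion, exists_prop]
  constructor
  · rintro ⟨hωM, hωd⟩
    obtain ⟨j, hωj⟩ := mem_iUnion.1 hωM
    obtain ⟨x, hx, hxe⟩ := dSet_mem d (⟨(hA ⟨0, hm⟩).choose, mem_iUnion.2 ⟨_, (hA ⟨0, hm⟩).choose_spec⟩⟩ : Au.Nonempty) ω
    obtain ⟨i, hxi⟩ := mem_iUnion.1 hx
    -- dSet d (A i) ω ≤ d x ω = dSet d Au ω = Δ
    have h1 : dSet d (A i) ω ≤ dSets d Au Mu := by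
      calc dSet d (A i) ω ≤ d x ω := dSet_le d hxi
        _ = dSet d Au ω := hxe.symm
        _ = dSets d Au Mu := hωd
    -- Δᵢⱼ ≤ dSet d (A i) ω
    have h2 : dSets d (A i) (M j) ≤ dSet d (A i) ω := by
      obtain ⟨x', hx', hxe'⟩ := dSet_mem d (hA i) ω
      rw [hxe']
      exact dSets_le d hx' hωj
    have heq : dSets d (A i) (M j) = dSets d Au Mu :=
      le_antisymm (h2.trans h1) (hDle i j)
    exact ⟨(i, j), heq, hωj, le_antisymm (h1.trans heq.ge) h2⟩
  · rintro ⟨⟨i, j⟩, hij, hωj, hωd⟩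
    have hωM : ω ∈ Mu := mem_iUnion.2 ⟨j, hωj⟩
    refine ⟨hωM, le_antisymm ?_ ?_⟩
    · obtain ⟨x, hx, hxe⟩ := dSet_mem d (hA i) ω
      calc dSet d Au ω ≤ d x ω := dSet_le d (mem_iUnion.2 ⟨i, hx⟩)
        _ = dSet d (A i) ω := hxe.symm
        _ = dSets d (A i) (M j) := hωd
        _ = dSets d Au Mu := hij
    · obtain ⟨x, hx, hxe⟩ := dSet_mem d
        (⟨(hA ⟨0, hm⟩).choose, mem_iUnion.2 ⟨_, (hA ⟨0, hm⟩).choose_spec⟩⟩ : Au.Nonempty) ω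
      rw [hxe]
      exact dSets_le d hx hωM
end

section
/- (Levi identity consistency) With Ω finite, revision ∗ defined by minimal distance as Mod(ψ ∗ μ) = {ω ∈ Mod(μ) | d(Mod(ψ), ω) = d(Mod(ψ), Mod(μ))}, and contraction defined via the Harper identity Mod(ψ − μ) = Mod(ψ) ∪ Mod(ψ ∗ ¬μ), the Levi identity recovers the original revision: Mod((ψ − ¬μ) ∧ μ) = Mod(ψ ∗ μ), provided d satisfies separation and Mod(ψ), Mod(μ) are nonempty. -/
open Set

/-- Levi identity consistency: with contraction defined from
revision via the Harper identity, the Levi identity recovers revision: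
`Mod ((ψ − ¬μ) ∧ μ) = Mod (ψ ∗ μ)`. -/
theorem levi_identity {Ω : Type*} [Fintype Ω] (d : Ω → Ω → ℝ)
    (hnonneg : ∀ ω ν, 0 ≤ d ω ν)
    (hsep : ∀ ω ν, d ω ν = 0 ↔ ω = ν)
    (ψ μ : Set Ω) (hψ : ψ.Nonempty) (hμ : μ.Nonempty) :
    (ψ ∪ rev d ψ (μᶜ)ᶜ) ∩ μ = rev d ψ μ := by
  rw [compl_compl]
  ext ω
  constructor
  · rintro ⟨hmem, hωμ⟩
    rcases hmem with hωψ | hrev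
    · -- ω ∈ ψ ∩ μ : both distances are 0
      have hds : dSet d ψ ω = 0 := by
        apply le_antisymm
        · apply csInf_le ((Set.toFinite _).bddBelow)
          exact ⟨ω, hωψ, (hsep ω ω).mpr rfl⟩
        · apply le_csInf (hψ.image _)
          rintro x ⟨y, -, rfl⟩; exact hnonneg y ω
      have hdd : dSets d ψ μ = 0 := by
        apply le_antisymm
        · apply csInf_le ((Set.toFinite _).bddBelow)
          exact ⟨ω, hωψ, ω, hωμ, (hsep ω ω).mpr rfl⟩
        · apply le_csInf (Set.Nonempty.image2 hψ hμ)
          rintro x ⟨a, -, b, -, rfl⟩; exact hnonneg a b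
      exact ⟨hωμ, by simp only [dSet, dSets] at hds hdd ⊢; rw [hds, hdd]⟩
    · exact hrev
  · intro h
    exact ⟨Or.inr h, h.1⟩
end
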